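/- Let a > 0 and define φ₀ : ℝ² → ℝ by φ₀(x) = -2 log(1 + π a |x|²). For every R > 0, ∫_{B_R(0)} |∇φ₀(x)|² dx = 16π ( log(1 + π a R²) + 1/(1 + π a R²) - 1 ). -/

import Mathlib

open Real MeasureTheory

/-!
With `c = π a`, `φ₀` is radial and `‖∇φ₀ x‖² = 16 c² r² / (1 + c r²)²` at `r = ‖x‖`. Integrating in
polar coordinates turns the left-hand side into `2π ∫₀ᴿ r · 16 c² r² / (1 + c r²)² dr`, and
`8 log (1 + c r²) + 8 / (1 + c r²)` is an antiderivative of the integrand.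
-/

open Set Metric Module in
theorem MeasureTheory.setIntegral_ball_fun_norm_addHaar {E F : Type*} [NormedAddCommGroup E]
    [NormedSpace ℝ E] [Nontrivial E] [FiniteDimensional ℝ E] [MeasurableSpace E] [BorelSpace E]
    [NormedAddCommGroup F] [NormedSpace ℝ F]
    (μ : Measure E) [μ.IsAddHaarMeasure] (f : ℝ → F) {R : ℝ} (hR : 0 ≤ R) :
    ∫ x in ball (0 : E) R, f ‖x‖ ∂μ =
      finrank ℝ E • μ.real (ball 0 1) • ∫ r in 0..R, r ^ (finrank ℝ E - 1) • f r := by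
  have hball :
      (ball (0 : E) R).indicator (fun x => f ‖x‖) = fun x => (Iio R).indicator f ‖x‖ := by
    ext x; simp [indicator]
  rw [← integral_indicator measurableSet_ball, hball, integral_fun_norm_addHaar μ,
    intervalIntegral.integral_of_le hR, integral_Ioc_eq_integral_Ioo, ← Iio_inter_Ioi,
    ← Measure.restrict_restrict measurableSet_Iio, ← integral_indicator measurableSet_Iio]
  congr with r
  by_cases hrR : r < R <;> simp [hrR]

open Metric in
theorem EuclideanSpace.setIntegral_ball_fun_norm_fin_two {F : Type*} [NormedAddCommGroup F]
    [NormedSpace ℝ F] (f : ℝ → F) {R : ℝ} (hR : 0 ≤ R) :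
    ∫ x in ball (0 : EuclideanSpace ℝ (Fin 2)) R, f ‖x‖ = (2 * π) • ∫ r in 0..R, r • f r := by
  rw [setIntegral_ball_fun_norm_addHaar volume f hR, finrank_euclideanSpace_fin, measureReal_def,
    EuclideanSpace.volume_ball_fin_two]
  simp only [ENNReal.ofReal_one, one_pow, one_mul, ENNReal.toReal_ofReal pi_pos.le,
    Nat.add_one_sub_one, pow_one]
  rw [← smul_assoc, nsmul_eq_mul, Nat.cast_ofNat]

theorem HasDerivAt.hasGradientAt_comp_norm_sq {F : Type*} [NormedAddCommGroup F]
    [InnerProductSpace ℝ F] [CompleteSpace F] {g : ℝ → ℝ} {g' : ℝ} {x : F}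
    (hg : HasDerivAt g g' (‖x‖ ^ 2)) :
    HasGradientAt (fun y => g (‖y‖ ^ 2)) ((2 * g') • x) x := by
  refine (hg.comp_hasFDerivAt x (hasStrictFDerivAt_norm_sq x).hasFDerivAt).congr_fderiv ?_
  ext y
  simp only [smul_apply, coe_innerSL_apply, nsmul_eq_mul, Nat.cast_ofNat,
    smul_eq_mul, map_smul, InnerProductSpace.toDual_apply_apply]
  ring

theorem hasDerivAt_log_one_add_mul_sq_add_inv {c r : ℝ} (hc : 0 ≤ c) :
    HasDerivAt (fun r => 8 * log (1 + c * r ^ 2) + 8 * (1 + c * r ^ 2)⁻¹)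
      (r * (16 * c ^ 2 * r ^ 2 / (1 + c * r ^ 2) ^ 2)) r := by
  have hpos : 0 < 1 + c * r ^ 2 := by positivity
  have hu : HasDerivAt (fun r : ℝ => 1 + c * r ^ 2) (c * (2 * r)) r := by
    simpa using ((hasDerivAt_pow 2 r).const_mul c).const_add 1
  refine (((hu.log hpos.ne').const_mul 8).add ((hu.inv hpos.ne').const_mul 8)).congr_deriv ?_
  field_simp
  ring

theorem integral_mul_sq_div_one_add_mul_sq_sq {c : ℝ} (hc : 0 ≤ c) (R : ℝ) :
    ∫ r in 0..R, r * (16 * c ^ 2 * r ^ 2 / (1 + c * r ^ 2) ^ 2) =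
      8 * (log (1 + c * R ^ 2) + 1 / (1 + c * R ^ 2) - 1) := by
  have hpos : ∀ r : ℝ, 0 < 1 + c * r ^ 2 := fun r => by positivity
  rw [intervalIntegral.integral_eq_sub_of_hasDerivAt
    (fun r _ => hasDerivAt_log_one_add_mul_sq_add_inv hc)]
  · simp only [ne_eq, OfNat.ofNat_ne_zero, not_false_eq_true, zero_pow, mul_zero, add_zero,
      log_one, inv_one, mul_one, zero_add, one_div]
    ring
  · refine Continuous.intervalIntegrable ?_ _ _
    exact continuous_id.mul <| (by fun_prop : Continuous fun r : ℝ => 16 * c ^ 2 * r ^ 2).div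
      (by fun_prop) fun r => (pow_pos (hpos r) 2).ne'

theorem stmt_3 (a : ℝ) (ha : 0 < a)
    (φ₀ : EuclideanSpace ℝ (Fin 2) → ℝ)
    (hφ₀ : ∀ x, φ₀ x = -2 * Real.log (1 + Real.pi * a * ‖x‖ ^ 2))
    (R : ℝ) (hR : 0 < R) :
    ∫ x in Metric.ball (0 : EuclideanSpace ℝ (Fin 2)) R, ‖gradient φ₀ x‖ ^ 2 =
      16 * Real.pi * (Real.log (1 + Real.pi * a * R ^ 2)
        + 1 / (1 + Real.pi * a * R ^ 2) - 1) := by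
  set c := π * a
  have hc : 0 ≤ c := by positivity
  have hφ₀' : φ₀ = fun x => -2 * log (1 + c * ‖x‖ ^ 2) := funext hφ₀
  have hgrad (x : EuclideanSpace ℝ (Fin 2)) :
      ‖gradient φ₀ x‖ ^ 2 = 16 * c ^ 2 * ‖x‖ ^ 2 / (1 + c * ‖x‖ ^ 2) ^ 2 := by
    have hpos : 0 < 1 + c * ‖x‖ ^ 2 := by positivity
    have hlog : HasDerivAt (fun t => -2 * log (1 + c * t)) (-2 * (c / (1 + c * ‖x‖ ^ 2)))
        (‖x‖ ^ 2) :=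
      ((((hasDerivAt_id _).const_mul c).const_add 1).log hpos.ne' |>.const_mul (-2)).congr_deriv
        (by simp)
    rw [hφ₀', hlog.hasGradientAt_comp_norm_sq.gradient, norm_smul, mul_pow, norm_eq_abs, sq_abs]
    field_simp
    ring
  simp_rw [hgrad]
  rw [EuclideanSpace.setIntegral_ball_fun_norm_fin_two
      (fun r => 16 * c ^ 2 * r ^ 2 / (1 + c * r ^ 2) ^ 2) hR.le]
  simp only [smul_eq_mul]
  rw [integral_mul_sq_div_one_add_mul_sq_sq hc]
  ring
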